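/- (Lemma 4.2 of the paper) Let 𝑴 be a real symmetric positive definite M×M matrix with unique symmetric positive definite square root 𝑴^{1/2} and 𝑴^{−1/2} = (𝑴^{1/2})^{−1}, let 𝒜 be a real symmetric positive definite M×M matrix, and let U₀ ∈ ℝ^M. Then there exists a constant C > 0, depending only on 𝑴, 𝒜 and U₀ (in particular independent of n and τ), such that the following holds: for every integer n ≥ 1 and every τ ∈ (0,1) with max{τ‖𝒜‖₂, ‖I − τ𝒜‖₂} < 1 and nτ ≤ 1, if Ũ is the M×(n+1) matrix with columns Ũ_k = 𝑴^{−1/2}(I + τ𝒜)^{−k}𝑴^{1/2}U₀ (k = 0, …, n), Ū* is the M×(n+1) matrix with columns Ū*_k = (1 − τ‖𝒜‖₂)^k U₀ (k = 0, …, n), X̃ = ŨᵀŨ and X̄* = Ū*ᵀŪ*, then ‖X̃ − X̄*‖_F² ≤ C n⁴ τ². -/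

import Mathlib

/-! With `B = (1 + τ𝒜)⁻¹` and `c = 1 - τ‖𝒜‖₂`, positivity of `𝒜` gives `‖x‖ ≤ ‖(1 + τ𝒜)x‖`,
hence `‖B‖₂ ≤ 1`, and `B - cI = B(τ‖𝒜‖₂ I - cτ𝒜)` gives `‖B - cI‖₂ ≤ 2τ‖𝒜‖₂`. Telescoping
`Bᵏ - cᵏI` yields `‖Bᵏ - cᵏI‖₂ ≤ 2kτ‖𝒜‖₂`, so the columns `Ũ_k` and `Ū*_k` stay bounded and
differ by `O(nτ)` for `k ≤ n`. Each entry of `X̃ - X̄*` is a difference of inner products, hence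
`O(nτ)`, and summing `(n + 1)²` squared entries gives `O(n⁴τ²)`. -/

open Matrix Finset

/-- The spectral norm (operator 2-norm) of a real square matrix. -/
noncomputable def spec {M : ℕ} (A : Matrix (Fin M) (Fin M) ℝ) : ℝ :=
  ‖LinearMap.toContinuousLinearMap (Matrix.toEuclideanLin A)‖

/-- The squared Frobenius norm of a real matrix. -/
noncomputable def frobSq {m l : ℕ} (A : Matrix (Fin m) (Fin l) ℝ) : ℝ :=
  ∑ i, ∑ j, (A i j) ^ 2

/-- The squared Euclidean norm of a real vector. -/
noncomputable def vecNormSq {M : ℕ} (x : Fin M → ℝ) : ℝ := ∑ i, (x i) ^ 2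

/-- The Euclidean norm of a real vector. -/
noncomputable def vecNorm {M : ℕ} (x : Fin M → ℝ) : ℝ := Real.sqrt (∑ i, (x i) ^ 2)

/-- The M×(n+1) matrix whose columns are the vectors `v 0, …, v n`. -/
noncomputable def colMat {M n : ℕ} (v : Fin (n + 1) → Fin M → ℝ) :
    Matrix (Fin M) (Fin (n + 1)) ℝ :=
  Matrix.of fun i k => v k i

open scoped Matrix.Norms.L2Operator
open WithLp (toLp)

theorem norm_pow_sub_pow_le_of_norm_le_one {R : Type*} [SeminormedRing R] {a b : R}
    (ha : ‖a‖ ≤ 1) (hb : ‖b‖ ≤ 1) (k : ℕ) : ‖a ^ k - b ^ k‖ ≤ k * ‖a - b‖ := by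
  -- Starting at exponent `1` avoids `‖1‖`, which may exceed `1` in a seminormed ring.
  suffices h : ∀ k : ℕ, ‖a ^ (k + 1) - b ^ (k + 1)‖ ≤ (k + 1) * ‖a - b‖ by
    rcases k with _ | k
    · simp
    · exact_mod_cast h k
  intro k
  induction k with
  | zero => simp
  | succ k ih =>
    have hbk : ‖b ^ (k + 1)‖ ≤ 1 :=
      (norm_pow_le' b k.succ_pos).trans (pow_le_one₀ (norm_nonneg b) hb)
    calc ‖a ^ (k + 1 + 1) - b ^ (k + 1 + 1)‖
        = ‖a * (a ^ (k + 1) - b ^ (k + 1)) + (a - b) * b ^ (k + 1)‖ := by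
          rw [pow_succ' a (k + 1), pow_succ' b (k + 1), mul_sub, sub_mul]; abel_nf
      _ ≤ ‖a‖ * ‖a ^ (k + 1) - b ^ (k + 1)‖ + ‖a - b‖ * ‖b ^ (k + 1)‖ :=
        norm_add_le_of_le (norm_mul_le _ _) (norm_mul_le _ _)
      _ ≤ 1 * ((k + 1) * ‖a - b‖) + ‖a - b‖ * 1 := by gcongr
      _ = (↑(k + 1) + 1) * ‖a - b‖ := by push_cast; ring

theorem abs_inner_sub_inner_le {F : Type*} [NormedAddCommGroup F] [InnerProductSpace ℝ F]
    (x y x' y' : F) :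
    |inner ℝ x y - inner ℝ x' y'| ≤ ‖x - x'‖ * ‖y‖ + ‖x'‖ * ‖y - y'‖ := by
  have h : inner ℝ x y - inner ℝ x' y' = inner ℝ (x - x') y + inner ℝ x' (y - y') := by
    rw [inner_sub_left, inner_sub_right]; ring
  rw [h]
  exact (abs_add_le _ _).trans
    (add_le_add (abs_real_inner_le_norm _ _) (abs_real_inner_le_norm _ _))

namespace Matrix

variable {n : Type*} [Fintype n] [DecidableEq n]

theorem l2_opNorm_one_le {𝕜 : Type*} [RCLike 𝕜] : ‖(1 : Matrix n n 𝕜)‖ ≤ 1 := by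
  rw [cstar_norm_def, map_one]
  exact ContinuousLinearMap.norm_id_le

theorem l2_opNorm_pow_le_one {𝕜 : Type*} [RCLike 𝕜] {A : Matrix n n 𝕜} (hA : ‖A‖ ≤ 1) (k : ℕ) :
    ‖A ^ k‖ ≤ 1 := by
  induction k with
  | zero => exact l2_opNorm_one_le
  | succ k ih =>
    rw [pow_succ]
    exact (norm_mul_le _ _).trans (mul_le_one₀ ih (norm_nonneg _) hA)

theorem norm_toLp_mul_mul_mulVec_le {𝕜 : Type*} [RCLike 𝕜] (P X Q : Matrix n n 𝕜) (x : n → 𝕜) :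
    ‖toLp 2 ((P * X * Q) *ᵥ x)‖ ≤ ‖P‖ * ‖Q‖ * ‖X‖ * ‖toLp 2 x‖ := by
  refine ((P * X * Q).l2_opNorm_mulVec (toLp 2 x)).trans ?_
  gcongr
  calc ‖P * X * Q‖ ≤ ‖P‖ * ‖X‖ * ‖Q‖ := (norm_mul_le _ _).trans (by gcongr; exact norm_mul_le _ _)
    _ = ‖P‖ * ‖Q‖ * ‖X‖ := by ring

namespace PosSemidef

variable {A : Matrix n n ℝ}

theorem norm_toLp_le_norm_toLp_one_add_mulVec (hA : A.PosSemidef) (x : n → ℝ) :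
    ‖toLp 2 x‖ ≤ ‖toLp 2 ((1 + A) *ᵥ x)‖ := by
  have hquad : ‖toLp 2 x‖ ^ 2 ≤ inner ℝ (toLp 2 x) (toLp 2 ((1 + A) *ᵥ x)) := by
    rw [add_mulVec, one_mulVec, WithLp.toLp_add, inner_add_right, real_inner_self_eq_norm_sq,
      ← toEuclideanCLM_toLp, inner_toEuclideanCLM]
    simpa using hA.dotProduct_mulVec_nonneg x
  have := hquad.trans (real_inner_le_norm _ _)
  rcases (norm_nonneg (toLp 2 x)).eq_or_lt with h | h
  · rw [← h]; exact norm_nonneg _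
  · nlinarith

theorem isUnit_det_one_add (hA : A.PosSemidef) : IsUnit (1 + A).det :=
  (isUnit_iff_isUnit_det _).mp (PosDef.one.add_posSemidef hA).isUnit

theorem l2_opNorm_inv_one_add_le_one (hA : A.PosSemidef) : ‖(1 + A)⁻¹‖ ≤ 1 := by
  refine (toEuclideanCLM (n := n) (𝕜 := ℝ) (1 + A)⁻¹).opNorm_le_bound zero_le_one fun y => ?_
  have h := hA.norm_toLp_le_norm_toLp_one_add_mulVec ((1 + A)⁻¹ *ᵥ y.ofLp)
  rw [mulVec_mulVec, mul_nonsing_inv _ hA.isUnit_det_one_add, one_mulVec] at h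
  rw [one_mul]
  exact h

variable {τ : ℝ}

theorem l2_opNorm_inv_one_add_smul_sub_le (hA : A.PosSemidef) (hτ : 0 ≤ τ) (hτA : τ * ‖A‖ ≤ 1) :
    ‖(1 + τ • A)⁻¹ - (1 - τ * ‖A‖) • 1‖ ≤ 2 * τ * ‖A‖ := by
  have hτA' : (τ • A).PosSemidef := hA.smul hτ
  set B := (1 + τ • A)⁻¹
  set c := 1 - τ * ‖A‖
  have hc : 0 ≤ c := by linarith
  have hc1 : c ≤ 1 := by nlinarith [mul_nonneg hτ (norm_nonneg A)]
  have hfactor : B - c • 1 = B * ((τ * ‖A‖) • 1 - (c * τ) • A) := by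
    have h1c : (τ * ‖A‖) • (1 : Matrix n n ℝ) - (c * τ) • A = 1 - c • (1 + τ • A) := by
      simp only [c]; module
    rw [h1c, mul_sub, mul_one, mul_smul_comm, nonsing_inv_mul _ hτA'.isUnit_det_one_add]
  calc ‖B - c • 1‖ ≤ ‖B‖ * ‖(τ * ‖A‖) • (1 : Matrix n n ℝ) - (c * τ) • A‖ := by
        rw [hfactor]; exact norm_mul_le _ _
    _ ≤ 1 * ((τ * ‖A‖) * 1 + (c * τ) * ‖A‖) := by
        gcongr
        · exact hτA'.l2_opNorm_inv_one_add_le_one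
        · refine (norm_sub_le _ _).trans (add_le_add ?_ ?_)
          · rw [norm_smul, Real.norm_of_nonneg (by positivity)]
            gcongr
            exact l2_opNorm_one_le
          · rw [norm_smul, Real.norm_of_nonneg (by positivity)]
    _ ≤ 2 * τ * ‖A‖ := by
        nlinarith [mul_le_mul_of_nonneg_right hc1 (mul_nonneg hτ (norm_nonneg A))]

theorem l2_opNorm_inv_one_add_smul_pow_sub_le (hA : A.PosSemidef) (hτ : 0 ≤ τ)
    (hτA : τ * ‖A‖ ≤ 1) (k : ℕ) :
    ‖(1 + τ • A)⁻¹ ^ k - (1 - τ * ‖A‖) ^ k • 1‖ ≤ k * (2 * τ * ‖A‖) := by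
  have hc : ‖(1 - τ * ‖A‖) • (1 : Matrix n n ℝ)‖ ≤ 1 := by
    rw [norm_smul, Real.norm_of_nonneg (by linarith)]
    exact mul_le_one₀ (by nlinarith [mul_nonneg hτ (norm_nonneg A)]) (norm_nonneg _)
      l2_opNorm_one_le
  have h := norm_pow_sub_pow_le_of_norm_le_one (hA.smul hτ).l2_opNorm_inv_one_add_le_one hc k
  rw [smul_pow, one_pow] at h
  exact h.trans (by gcongr; exact hA.l2_opNorm_inv_one_add_smul_sub_le hτ hτA)

theorem norm_toLp_conj_inv_one_add_smul_pow_mulVec_le (hA : A.PosSemidef) (hτ : 0 ≤ τ)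
    (S : Matrix n n ℝ) (x : n → ℝ) (k : ℕ) :
    ‖toLp 2 ((S⁻¹ * (1 + τ • A)⁻¹ ^ k * S) *ᵥ x)‖ ≤ ‖S⁻¹‖ * ‖S‖ * ‖toLp 2 x‖ := by
  refine (norm_toLp_mul_mul_mulVec_le _ _ _ x).trans ?_
  have hpow := l2_opNorm_pow_le_one (hA.smul hτ).l2_opNorm_inv_one_add_le_one k
  calc ‖S⁻¹‖ * ‖S‖ * ‖(1 + τ • A)⁻¹ ^ k‖ * ‖toLp 2 x‖ ≤ ‖S⁻¹‖ * ‖S‖ * 1 * ‖toLp 2 x‖ := by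
        gcongr
    _ = ‖S⁻¹‖ * ‖S‖ * ‖toLp 2 x‖ := by ring

theorem norm_toLp_conj_inv_one_add_smul_pow_mulVec_sub_le (hA : A.PosSemidef) (hτ : 0 ≤ τ)
    (hτA : τ * ‖A‖ ≤ 1)
    {S : Matrix n n ℝ} (hS : IsUnit S.det) (x : n → ℝ) (k : ℕ) :
    ‖toLp 2 ((S⁻¹ * (1 + τ • A)⁻¹ ^ k * S) *ᵥ x - (1 - τ * ‖A‖) ^ k • x)‖ ≤
      ‖S⁻¹‖ * ‖S‖ * (k * (2 * τ * ‖A‖)) * ‖toLp 2 x‖ := by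
  have hdiff : (S⁻¹ * (1 + τ • A)⁻¹ ^ k * S) *ᵥ x - (1 - τ * ‖A‖) ^ k • x
      = (S⁻¹ * ((1 + τ • A)⁻¹ ^ k - (1 - τ * ‖A‖) ^ k • 1) * S) *ᵥ x := by
    rw [mul_sub, sub_mul, mul_smul_comm, mul_one, smul_mul_assoc, nonsing_inv_mul _ hS,
      sub_mulVec, smul_mulVec, one_mulVec]
  rw [hdiff]
  refine (norm_toLp_mul_mul_mulVec_le _ _ _ x).trans ?_
  gcongr
  exact hA.l2_opNorm_inv_one_add_smul_pow_sub_le hτ hτA k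

end PosSemidef

end Matrix

theorem spec_eq_l2_opNorm {M : ℕ} (A : Matrix (Fin M) (Fin M) ℝ) : spec A = ‖A‖ := rfl

theorem frobSq_le_of_abs_le {m l : ℕ} (X : Matrix (Fin m) (Fin l) ℝ) {ε : ℝ}
    (h : ∀ i j, |X i j| ≤ ε) : frobSq X ≤ m * l * ε ^ 2 := by
  calc frobSq X ≤ ∑ _i : Fin m, ∑ _j : Fin l, ε ^ 2 :=
        sum_le_sum fun i _ => sum_le_sum fun j _ =>
          sq_le_sq.mpr ((h i j).trans (le_abs_self ε))
    _ = m * l * ε ^ 2 := by simp [mul_assoc]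

theorem colMat_transpose_mul_colMat_apply {M n : ℕ} (u v : Fin (n + 1) → Fin M → ℝ)
    (i j : Fin (n + 1)) : ((colMat u)ᵀ * colMat v) i j = u i ⬝ᵥ v j := rfl

theorem frobSq_gram_sub_le {M n : ℕ} (u w : Fin (n + 1) → Fin M → ℝ) {R δ : ℝ}
    (hu : ∀ k, ‖toLp 2 (u k)‖ ≤ R) (hw : ∀ k, ‖toLp 2 (w k)‖ ≤ R)
    (huw : ∀ k, ‖toLp 2 (u k - w k)‖ ≤ δ) :
    frobSq ((colMat u)ᵀ * colMat u - (colMat w)ᵀ * colMat w) ≤ (n + 1) ^ 2 * (2 * R * δ) ^ 2 := by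
  have hR : 0 ≤ R := (norm_nonneg _).trans (hu 0)
  have hδ : 0 ≤ δ := (norm_nonneg _).trans (huw 0)
  have hentry (i j) : |((colMat u)ᵀ * colMat u - (colMat w)ᵀ * colMat w) i j| ≤ 2 * R * δ := by
    have h := abs_inner_sub_inner_le (toLp 2 (u j)) (toLp 2 (u i)) (toLp 2 (w j)) (toLp 2 (w i))
    simp only [EuclideanSpace.inner_toLp_toLp, star_trivial, ← WithLp.toLp_sub] at h
    rw [Matrix.sub_apply, colMat_transpose_mul_colMat_apply, colMat_transpose_mul_colMat_apply]
    calc _ ≤ _ := h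
      _ ≤ δ * R + R * δ := add_le_add (mul_le_mul (huw j) (hu i) (norm_nonneg _) hδ)
          (mul_le_mul (hw j) (huw i) (norm_nonneg _) hR)
      _ = 2 * R * δ := by ring
  calc _ ≤ _ := frobSq_le_of_abs_le _ hentry
    _ = (n + 1) ^ 2 * (2 * R * δ) ^ 2 := by push_cast; ring

theorem lemma_4_2_general {M : ℕ} (Msq A : Matrix (Fin M) (Fin M) ℝ)
    (hMsq : Msq.PosDef) (hA : A.PosDef) (U₀ : Fin M → ℝ) :
    ∃ C > 0, ∀ n : ℕ, 1 ≤ n → ∀ τ : ℝ, 0 < τ → τ < 1 →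
      τ * spec A < 1 → spec (1 - τ • A) < 1 → (n : ℝ) * τ ≤ 1 →
      frobSq ((colMat fun k : Fin (n + 1) =>
            (Msq⁻¹ * ((1 + τ • A)⁻¹) ^ (k : ℕ) * Msq).mulVec U₀)ᵀ *
          (colMat fun k : Fin (n + 1) =>
            (Msq⁻¹ * ((1 + τ • A)⁻¹) ^ (k : ℕ) * Msq).mulVec U₀) -
          (colMat fun k : Fin (n + 1) => (1 - τ * spec A) ^ (k : ℕ) • U₀)ᵀ *
          (colMat fun k : Fin (n + 1) => (1 - τ * spec A) ^ (k : ℕ) • U₀)) ≤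
        C * (n : ℝ) ^ 4 * τ ^ 2 := by
  set κ := ‖Msq⁻¹‖ * ‖Msq‖
  set ν := ‖toLp 2 U₀‖
  set L := 2 * ((κ + 1) * ν) * (κ * (2 * ‖A‖) * ν)
  refine ⟨4 * L ^ 2 + 1, by positivity, fun n hn τ hτ _ hτA _ _ => ?_⟩
  rw [spec_eq_l2_opNorm] at hτA ⊢
  have hκ : 0 ≤ κ := by positivity
  have hτA₀ : 0 ≤ τ * ‖A‖ := by positivity
  have hA' := hA.posSemidef
  have hu (k : Fin (n + 1)) : ‖toLp 2 ((Msq⁻¹ * (1 + τ • A)⁻¹ ^ (k : ℕ) * Msq) *ᵥ U₀)‖ ≤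
      (κ + 1) * ν :=
    (hA'.norm_toLp_conj_inv_one_add_smul_pow_mulVec_le hτ.le Msq U₀ k).trans (by gcongr; linarith)
  have hw (k : Fin (n + 1)) : ‖toLp 2 ((1 - τ * ‖A‖) ^ (k : ℕ) • U₀)‖ ≤ (κ + 1) * ν := by
    rw [WithLp.toLp_smul, norm_smul, norm_pow, Real.norm_eq_abs]
    gcongr
    exact (pow_le_one₀ (abs_nonneg _) (abs_le.mpr ⟨by linarith, by linarith⟩)).trans (by linarith)
  have huw (k : Fin (n + 1)) : ‖toLp 2 ((Msq⁻¹ * (1 + τ • A)⁻¹ ^ (k : ℕ) * Msq) *ᵥ U₀ -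
      (1 - τ * ‖A‖) ^ (k : ℕ) • U₀)‖ ≤ κ * (n * (2 * τ * ‖A‖)) * ν :=
    (hA'.norm_toLp_conj_inv_one_add_smul_pow_mulVec_sub_le hτ.le hτA.le
      ((isUnit_iff_isUnit_det _).mp hMsq.isUnit) U₀ k).trans (by gcongr; exact_mod_cast k.is_le)
  have hn' : (1 : ℝ) ≤ n := by exact_mod_cast hn
  calc _ ≤ (n + 1) ^ 2 * (2 * ((κ + 1) * ν) * (κ * (n * (2 * τ * ‖A‖)) * ν)) ^ 2 :=
        frobSq_gram_sub_le _ _ hu hw huw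
    _ = (n + 1) ^ 2 * (L * n * τ) ^ 2 := by ring
    _ ≤ 4 * n ^ 2 * (L * n * τ) ^ 2 := by gcongr; nlinarith
    _ ≤ (4 * L ^ 2 + 1) * n ^ 4 * τ ^ 2 := by nlinarith [sq_nonneg ((n : ℝ) ^ 2 * τ)]

/-- **Lemma 4.2.** There is a constant `C > 0`, independent of `n` and `τ`, such that
for all `n ≥ 1` and `τ ∈ (0,1)` with `max{τ‖𝒜‖₂, ‖I - τ𝒜‖₂} < 1` and `nτ ≤ 1`,
`‖X̃ - X̄*‖_F² ≤ C n⁴ τ²`, where `X̃ = ŨᵀŨ` with `Ũ_k = 𝑴^{-1/2}(I + τ𝒜)^{-k}𝑴^{1/2}U₀`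
and `X̄* = Ū*ᵀŪ*` with `Ū*_k = (1 - τ‖𝒜‖₂)^k U₀`. -/
theorem lemma_4_2 {M : ℕ} (Mmat Msq A : Matrix (Fin M) (Fin M) ℝ)
    (hM : Mmat.PosDef) (hMsq : Msq.PosDef) (hsq : Msq * Msq = Mmat)
    (hA : A.PosDef) (U₀ : Fin M → ℝ) :
    ∃ C > 0, ∀ n : ℕ, 1 ≤ n → ∀ τ : ℝ, 0 < τ → τ < 1 →
      τ * spec A < 1 → spec (1 - τ • A) < 1 → (n : ℝ) * τ ≤ 1 →
      frobSq ((colMat fun k : Fin (n + 1) =>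
            (Msq⁻¹ * ((1 + τ • A)⁻¹) ^ (k : ℕ) * Msq).mulVec U₀)ᵀ *
          (colMat fun k : Fin (n + 1) =>
            (Msq⁻¹ * ((1 + τ • A)⁻¹) ^ (k : ℕ) * Msq).mulVec U₀) -
          (colMat fun k : Fin (n + 1) => (1 - τ * spec A) ^ (k : ℕ) • U₀)ᵀ *
          (colMat fun k : Fin (n + 1) => (1 - τ * spec A) ^ (k : ℕ) • U₀)) ≤
        C * (n : ℝ) ^ 4 * τ ^ 2 :=
  lemma_4_2_general Msq A hMsq hA U₀
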